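/- arXiv:1903.04883 — 3 statements merged into one kernel-verified Lean document; each statement's English description precedes it below -/
import Mathlib

section
/- For every integer p ≥ 1 and every odd integer k with 1 ≤ k ≤ 2p, one has ∑_{j=−p}^{p} δ^k_{p,j} · j^{2p+2} = 0. -/
/-- Lagrange basis polynomial `F_{p,j}` on nodes `-p, …, p`. -/
noncomputable def Fpoly (p : ℕ) (j : ℤ) (x : ℝ) : ℝ :=
  ∏ r ∈ (Finset.Icc (-(p:ℤ)) (p:ℤ)).erase j, (x - (r:ℝ)) / ((j:ℝ) - (r:ℝ))

/-- `δ^k_{p,j} = F_{p,j}^{(k)}(0)`. -/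
noncomputable def delta (p k : ℕ) (j : ℤ) : ℝ := iteratedDeriv k (Fpoly p j) 0

lemma Fpoly_neg (p : ℕ) (j : ℤ) (x : ℝ) : Fpoly p (-j) x = Fpoly p j (-x) := by
  unfold Fpoly
  refine Finset.prod_nbij' (fun r => -r) (fun r => -r) ?_ ?_ ?_ ?_ ?_
  · intro r hr
    simp only [Finset.mem_erase, Finset.mem_Icc] at hr ⊢
    omega
  · intro r hr
    simp only [Finset.mem_erase, Finset.mem_Icc] at hr ⊢
    omega
  · intro r _; ring
  · intro r _; ring
  · intro r _
    push_cast
    rw [div_eq_div_iff]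
    · ring
    · intro h
      simp only [Finset.mem_erase, Finset.mem_Icc] at *
      have : (-j : ℝ) = r := by linarith
      exact_mod_cast ‹r ≠ -j ∧ _›.1 (by exact_mod_cast this.symm)
    · intro h
      simp only [Finset.mem_erase, Finset.mem_Icc] at *
      have : (j : ℝ) = -r := by linarith
      have : j = -r := by exact_mod_cast this
      omega

lemma delta_neg (p k : ℕ) (j : ℤ) : delta p k (-j) = (-1:ℝ)^k * delta p k j := by
  unfold delta
  have h : Fpoly p (-j) = fun x => Fpoly p j (-x) := funext fun x => Fpoly_neg p j x
  rw [h, iteratedDeriv_comp_neg, neg_zero, smul_eq_mul]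

/-- For odd k: ∑_{j=-p}^{p} δ^k_{p,j} j^{2p+2} = 0. -/
theorem delta_moment_even_power_of_odd (p : ℕ) (hp : 1 ≤ p) (k : ℕ)
    (hodd : Odd k) (hk1 : 1 ≤ k) (hk2 : k ≤ 2*p) :
    ∑ j ∈ Finset.Icc (-(p:ℤ)) (p:ℤ), delta p k j * (j:ℝ)^(2*p+2) = 0 := by
  refine Finset.sum_involution (fun j _ => -j) ?_ ?_ ?_ ?_
  · intro j _
    rw [delta_neg, hodd.neg_one_pow]
    push_cast
    rw [Even.neg_pow (by exact ⟨p+1, by ring⟩)]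
    ring
  · intro j _ hne h
    have hj0 : j = 0 := by omega
    apply hne
    rw [hj0]
    simp
  · intro j hj
    simp only [Finset.mem_Icc] at hj ⊢
    omega
  · intro j _; ring
end

section
/- For every integer p ≥ 1, all integers k, s with 1 ≤ k ≤ 2p−1 and 0 ≤ s ≤ k, every real number q, and every integer l with −p+1 ≤ l ≤ p, one has ∑_{j=−p+1}^{p} γ^{s,q}_{p,j} · γ^{k−s,j}_{p,l} = γ^{k,q}_{p,l}, where γ^{k−s,j}_{p,l} denotes the weight with evaluation point the integer j. -/
/-!
The weights `γ^{s,q}_{p,·}` differentiate every polynomial `P` of degree `< 2p` exactly,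
`∑ⱼ P(j) γ^{s,q}_{p,j} = P^{(s)}(q)`, because `P` equals its Lagrange interpolant on the `2p`
nodes. Applied to `P = G_{p,l}^{(k-s)}`, whose value at the node `j` is `γ^{k-s,j}_{p,l}`, the
left side becomes `G_{p,l}^{(k)}(q) = γ^{k,q}_{p,l}`.
-/

/-- Lagrange basis polynomial `G_{p,j}` on nodes `-p+1, …, p`. -/
noncomputable def Gpoly (p : ℕ) (j : ℤ) (x : ℝ) : ℝ :=
  ∏ r ∈ (Finset.Icc (-(p:ℤ)+1) (p:ℤ)).erase j, (x - (r:ℝ)) / ((j:ℝ) - (r:ℝ))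

/-- `γ^{k,q}_{p,j} = G_{p,j}^{(k)}(q)`. -/
noncomputable def gam (p k : ℕ) (q : ℝ) (j : ℤ) : ℝ := iteratedDeriv k (Gpoly p j) q

open Polynomial Finset

theorem Polynomial.iteratedDeriv_eval {𝕜 : Type*} [NontriviallyNormedField 𝕜] (P : 𝕜[X])
    (k : ℕ) : iteratedDeriv k (fun x => P.eval x) = fun x => (derivative^[k] P).eval x := by
  induction k generalizing P with
  | zero => simp
  | succ k ih =>
    have hderiv : _root_.deriv (fun x => P.eval x) = fun x => (derivative P).eval x :=
      _root_.funext fun _ => P.deriv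
    rw [iteratedDeriv_succ', hderiv, ih, Function.iterate_succ_apply]

theorem Polynomial.degree_iterate_derivative_le {R : Type*} [Semiring R] (P : R[X]) (m : ℕ) :
    (derivative^[m] P).degree ≤ P.degree := by
  induction m with
  | zero => simp
  | succ m ih =>
    rw [Function.iterate_succ_apply']
    exact degree_derivative_le.trans ih

theorem Lagrange.sum_eval_mul_iterate_derivative_basis {F ι : Type*} [Field F] [DecidableEq ι]
    {s : Finset ι} {v : ι → F} (hvs : Set.InjOn v s) {P : F[X]} (hP : P.degree < #s)
    (m : ℕ) (x : F) :
    ∑ i ∈ s, P.eval (v i) * (derivative^[m] (Lagrange.basis s v i)).eval x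
      = (derivative^[m] P).eval x := by
  conv_rhs => rw [Lagrange.eq_interpolate hvs hP]
  simp only [Lagrange.interpolate_apply, iterate_derivative_sum, iterate_derivative_C_mul,
    eval_finsetSum, eval_mul, eval_C]

theorem Gpoly_eq_eval_basis (p : ℕ) (j : ℤ) :
    Gpoly p j = fun x => (Lagrange.basis (Icc (-(p:ℤ)+1) p) (fun i : ℤ => (i : ℝ)) j).eval x := by
  funext x
  rw [Gpoly, Lagrange.basis, eval_prod]
  refine prod_congr rfl fun r _ => ?_
  simp [Lagrange.basisDivisor, div_eq_mul_inv, mul_comm]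

theorem gam_eq_eval_iterate_derivative_basis (p k : ℕ) (q : ℝ) (j : ℤ) :
    gam p k q j =
      (derivative^[k] (Lagrange.basis (Icc (-(p:ℤ)+1) p) (fun i : ℤ => (i : ℝ)) j)).eval q := by
  rw [gam, Gpoly_eq_eval_basis, iteratedDeriv_eval]

theorem gam_composition_general (p : ℕ) (k s : ℕ)
    (hs : s ≤ k) (q : ℝ)
    (l : ℤ) (hl1 : -(p:ℤ)+1 ≤ l) (hl2 : l ≤ (p:ℤ)) :
    ∑ j ∈ Finset.Icc (-(p:ℤ)+1) (p:ℤ), gam p s q j * gam p (k-s) (j:ℝ) l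
      = gam p k q l := by
  set t := Icc (-(p:ℤ)+1) (p:ℤ)
  have hinj : Set.InjOn (fun i : ℤ => (i : ℝ)) t := Int.cast_injective.injOn
  have hl : l ∈ t := mem_Icc.mpr ⟨hl1, hl2⟩
  set B := Lagrange.basis t (fun i : ℤ => (i : ℝ)) l
  have hB : B.degree < #t := by
    rw [Lagrange.degree_basis hinj hl]
    exact_mod_cast Nat.sub_lt (card_pos.mpr ⟨l, hl⟩) one_pos
  have hsum := Lagrange.sum_eval_mul_iterate_derivative_basis hinj
    ((degree_iterate_derivative_le B (k - s)).trans_lt hB) s q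
  rw [← Function.iterate_add_apply, Nat.add_sub_cancel' hs] at hsum
  simp only [gam_eq_eval_iterate_derivative_basis]
  rw [← hsum]
  exact sum_congr rfl fun _ _ => mul_comm _ _

/-- Composition identity for the 2p-point differentiation weights:
∑_{j=-p+1}^{p} γ^{s,q}_{p,j} γ^{k-s,j}_{p,l} = γ^{k,q}_{p,l}. -/
theorem gam_composition (p : ℕ) (hp : 1 ≤ p) (k s : ℕ)
    (hk1 : 1 ≤ k) (hk2 : k ≤ 2*p - 1) (hs : s ≤ k) (q : ℝ)
    (l : ℤ) (hl1 : -(p:ℤ)+1 ≤ l) (hl2 : l ≤ (p:ℤ)) :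
    ∑ j ∈ Finset.Icc (-(p:ℤ)+1) (p:ℤ), gam p s q j * gam p (k-s) (j:ℝ) l
      = gam p k q l :=
  gam_composition_general p k s hs q l hl1 hl2
end

section
/- Let p ≥ 1 be an integer, a ∈ ℝ, Δx > 0, Δt > 0, and let (u_i)_{i∈ℤ} be a sequence of real numbers. In the Compact Approximate Taylor recursion with linear flux f(v) = a·v (i.e., f̃^{(0)}_{i,j} = a·u_{i+j} for j = −p+1, …, p; and for k = 1, …, 2p: ũ^{(k)}_{i,j} = −(1/Δx) ∑_{r=−p+1}^{p} γ^{1,j}_{p,r} · f̃^{(k−1)}_{i,r}, f̃^{k,r}_{i,j} = a·( u_{i+j} + ∑_{l=1}^{k} ((r·Δt)^l / l!) · ũ^{(l)}_{i,j} ), and f̃^{(k)}_{i,j} = (1/Δt^k) ∑_{r=−p+1}^{p} γ^{k,0}_{p,r} · f̃^{k,r}_{i,j}), the approximate time derivatives satisfy, for every 1 ≤ k ≤ 2p and every j with −p+1 ≤ j ≤ p: ũ^{(k)}_{i,j} = ((−1)^k a^k / Δx^k) ∑_{r=−p+1}^{p} γ^{k,j}_{p,r} · u_{i+r}, and moreover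 f̃^{(k)}_{i,j} = a · ũ^{(k)}_{i,j}. -/
open Polynomial Finset

noncomputable def Bpoly (p : ℕ) (j : ℤ) : ℝ[X] :=
  Lagrange.basis (Finset.Icc (-(p:ℤ)+1) (p:ℤ)) (fun r : ℤ => (r:ℝ)) j

lemma injOnS (p : ℕ) : Set.InjOn (fun r : ℤ => (r:ℝ)) ↑(Finset.Icc (-(p:ℤ)+1) (p:ℤ)) :=
  Int.cast_injective.injOn

lemma cardS (p : ℕ) : (Finset.Icc (-(p:ℤ)+1) (p:ℤ)).card = 2*p := by
  rw [Int.card_Icc]; omega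

lemma Gpoly_eq (p : ℕ) (j : ℤ) : Gpoly p j = fun x => (Bpoly p j).eval x := by
  funext x
  simp only [Gpoly, Bpoly, Lagrange.basis, Lagrange.basisDivisor, eval_prod, eval_mul,
    eval_C, eval_sub, eval_X]
  exact Finset.prod_congr rfl fun r _ => by rw [div_eq_mul_inv]; ring

lemma iteratedDeriv_polyeval (k : ℕ) (f : ℝ[X]) :
    iteratedDeriv k (fun x => f.eval x) = fun x => (derivative^[k] f).eval x := by
  induction k generalizing f with
  | zero => simp
  | succ n ih =>
    rw [iteratedDeriv_succ', Function.iterate_succ_apply]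
    rw [show deriv (fun x => f.eval x) = fun x => (derivative f).eval x from
      funext fun x => Polynomial.deriv (p := f)]
    exact ih _

lemma gam_eq (p k : ℕ) (q : ℝ) (j : ℤ) : gam p k q j = (derivative^[k] (Bpoly p j)).eval q := by
  rw [gam, Gpoly_eq, iteratedDeriv_polyeval]

lemma degree_iterate_le (k : ℕ) (f : ℝ[X]) : (derivative^[k] f).degree ≤ f.degree := by
  induction k with
  | zero => simp
  | succ n ih =>
    rw [Function.iterate_succ_apply']
    exact (degree_derivative_le).trans ih

lemma iter_deriv_sum {ι : Type*} (S : Finset ι) (c : ι → ℝ) (g : ι → ℝ[X]) (k : ℕ) :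
    derivative^[k] (∑ r ∈ S, C (c r) * g r) = ∑ r ∈ S, C (c r) * derivative^[k] (g r) := by
  induction k with
  | zero => simp
  | succ n ih =>
    rw [Function.iterate_succ_apply', ih, derivative_sum]
    exact Finset.sum_congr rfl fun r _ => by
      rw [derivative_C_mul, Function.iterate_succ_apply' derivative n (g r)]

lemma interp (p : ℕ) (f : ℝ[X]) (hf : f.degree < (2*p : ℕ)) (k : ℕ) (x : ℝ) :
    ∑ r ∈ Finset.Icc (-(p:ℤ)+1) (p:ℤ), f.eval (r:ℝ) * gam p k x r
      = (derivative^[k] f).eval x := by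
  have hdf : f.degree < (Finset.Icc (-(p:ℤ)+1) (p:ℤ)).card := by rw [cardS]; exact_mod_cast hf
  have heq := Lagrange.eq_interpolate (injOnS p) hdf
  conv_rhs => rw [heq, Lagrange.interpolate_apply]
  rw [iter_deriv_sum, eval_finset_sum]
  exact (Finset.sum_congr rfl fun r _ => by rw [eval_mul, eval_C, gam_eq]; rfl).symm

lemma degree_B (p : ℕ) (hp : 1 ≤ p) {s : ℤ} (hs : s ∈ Finset.Icc (-(p:ℤ)+1) (p:ℤ)) :
    (Bpoly p s).degree < (2*p : ℕ) := by
  rw [Bpoly, Lagrange.degree_basis (injOnS p) hs, cardS]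
  exact_mod_cast Nat.sub_lt (by omega) one_pos

lemma gam_comp (p : ℕ) (hp : 1 ≤ p) (m : ℕ) (x : ℝ) {s : ℤ}
    (hs : s ∈ Finset.Icc (-(p:ℤ)+1) (p:ℤ)) :
    ∑ r ∈ Finset.Icc (-(p:ℤ)+1) (p:ℤ), gam p 1 x r * gam p m (r:ℝ) s
      = gam p (m+1) x s := by
  have hd : (derivative^[m] (Bpoly p s)).degree < (2*p : ℕ) :=
    lt_of_le_of_lt (degree_iterate_le m _) (degree_B p hp hs)
  calc ∑ r ∈ Finset.Icc (-(p:ℤ)+1) (p:ℤ), gam p 1 x r * gam p m (r:ℝ) s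
      = ∑ r ∈ Finset.Icc (-(p:ℤ)+1) (p:ℤ),
          (derivative^[m] (Bpoly p s)).eval (r:ℝ) * gam p 1 x r :=
        Finset.sum_congr rfl fun r _ => by rw [gam_eq p m, mul_comm]
    _ = (derivative^[1] (derivative^[m] (Bpoly p s))).eval x := interp p _ hd 1 x
    _ = gam p (m+1) x s := by
        rw [gam_eq, Function.iterate_one,
          Function.iterate_succ_apply' derivative m (Bpoly p s)]

lemma gam_pow (p : ℕ) (k l : ℕ) (hl : l < 2*p) :
    ∑ r ∈ Finset.Icc (-(p:ℤ)+1) (p:ℤ), gam p k 0 r * (r:ℝ)^l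
      = if l = k then (k.factorial : ℝ) else 0 := by
  have h := interp p (X^l : ℝ[X]) (by rw [degree_X_pow]; exact_mod_cast hl) k 0
  rw [show ∑ r ∈ Finset.Icc (-(p:ℤ)+1) (p:ℤ), gam p k 0 r * (r:ℝ)^l
      = ∑ r ∈ Finset.Icc (-(p:ℤ)+1) (p:ℤ), (X^l : ℝ[X]).eval (r:ℝ) * gam p k 0 r from
    Finset.sum_congr rfl fun r _ => by rw [eval_pow, eval_X, mul_comm], h,
    Polynomial.iterate_derivative_X_pow_eq_natCast_mul]
  rcases lt_trichotomy l k with h1 | h1 | h1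
  · simp [Nat.descFactorial_eq_zero_iff_lt.mpr h1, Nat.ne_of_lt h1]
  · subst h1; simp [Nat.descFactorial_self]
  · have : l - k ≠ 0 := by omega
    simp [zero_pow this, Nat.ne_of_gt h1]

lemma gam_top (p : ℕ) (q : ℝ) {r : ℤ} (hr : r ∈ Finset.Icc (-(p:ℤ)+1) (p:ℤ)) :
    gam p (2*p) q r = 0 := by
  rw [gam_eq, Polynomial.iterate_derivative_eq_zero, eval_zero]
  rw [Bpoly, Lagrange.natDegree_basis (injOnS p) hr, cardS]
  have : 1 ≤ 2*p := by
    rcases Finset.nonempty_of_ne_empty (Finset.ne_empty_of_mem hr) with _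
    have := Finset.card_pos.mpr ⟨r, hr⟩
    rw [cardS] at this; omega
  omega

/-- In the CAT recursion with linear flux f(v) = a·v, the approximate time
derivatives satisfy, for 1 ≤ k ≤ 2p and -p+1 ≤ j ≤ p:
ũ^{(k)}_{i,j} = ((-1)^k a^k / Δx^k) ∑_r γ^{k,j}_{p,r} u_{i+r}, and
f̃^{(k)}_{i,j} = a ũ^{(k)}_{i,j}. -/
theorem CAT_linear_derivatives (p : ℕ) (hp : 1 ≤ p)
    (a Δx Δt : ℝ) (hΔx : 0 < Δx) (hΔt : 0 < Δt) (u : ℤ → ℝ) (i : ℤ)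
    (util ftil : ℕ → ℤ → ℝ) (fstage : ℕ → ℤ → ℤ → ℝ)
    (h0 : ∀ j ∈ Finset.Icc (-(p:ℤ)+1) (p:ℤ), ftil 0 j = a * u (i + j))
    (hu : ∀ k, 1 ≤ k → k ≤ 2*p → ∀ j ∈ Finset.Icc (-(p:ℤ)+1) (p:ℤ),
      util k j = -(1/Δx) *
        ∑ r ∈ Finset.Icc (-(p:ℤ)+1) (p:ℤ), gam p 1 (j:ℝ) r * ftil (k-1) r)
    (hs : ∀ k, 1 ≤ k → k ≤ 2*p → ∀ j ∈ Finset.Icc (-(p:ℤ)+1) (p:ℤ),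
      ∀ r ∈ Finset.Icc (-(p:ℤ)+1) (p:ℤ),
      fstage k r j = a * (u (i + j) +
        ∑ l ∈ Finset.Icc 1 k, ((r:ℝ)*Δt)^l / (Nat.factorial l : ℝ) * util l j))
    (hf : ∀ k, 1 ≤ k → k ≤ 2*p → ∀ j ∈ Finset.Icc (-(p:ℤ)+1) (p:ℤ),
      ftil k j = (1/Δt^k) *
        ∑ r ∈ Finset.Icc (-(p:ℤ)+1) (p:ℤ), gam p k 0 r * fstage k r j) :
    ∀ k, 1 ≤ k → k ≤ 2*p → ∀ j ∈ Finset.Icc (-(p:ℤ)+1) (p:ℤ),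
      util k j = ((-1:ℝ)^k * a^k / Δx^k) *
          ∑ r ∈ Finset.Icc (-(p:ℤ)+1) (p:ℤ), gam p k (j:ℝ) r * u (i + r) ∧
      ftil k j = a * util k j := by
  intro k
  induction k using Nat.strong_induction_on with
  | _ k IH =>
  intro hk1 hk2 j hj
  have hΔx' : Δx ≠ 0 := ne_of_gt hΔx
  have hΔt' : Δt ≠ 0 := ne_of_gt hΔt
  -- Part 1: the formula for util k j
  have hU : util k j = ((-1:ℝ)^k * a^k / Δx^k) *
      ∑ r ∈ Finset.Icc (-(p:ℤ)+1) (p:ℤ), gam p k (j:ℝ) r * u (i + r) := by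
    rcases Nat.lt_or_ge k 2 with hk | hk
    · -- base case k = 1
      have hk1' : k = 1 := by omega
      subst hk1'
      rw [hu 1 le_rfl (by omega) j hj]
      calc -(1/Δx) * ∑ r ∈ Finset.Icc (-(p:ℤ)+1) (p:ℤ), gam p 1 (j:ℝ) r * ftil 0 r
          = -(1/Δx) * ∑ r ∈ Finset.Icc (-(p:ℤ)+1) (p:ℤ),
              a * (gam p 1 (j:ℝ) r * u (i + r)) := by
            congr 1
            exact Finset.sum_congr rfl fun r hr => by rw [h0 r hr]; ring
        _ = ((-1:ℝ)^1 * a^1 / Δx^1) *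
              ∑ r ∈ Finset.Icc (-(p:ℤ)+1) (p:ℤ), gam p 1 (j:ℝ) r * u (i + r) := by
            rw [← Finset.mul_sum]
            ring
    · -- inductive step k = m + 1 with m ≥ 1
      obtain ⟨m, rfl⟩ : ∃ m, k = m + 1 := ⟨k-1, by omega⟩
      have hm1 : 1 ≤ m := by omega
      have hm2 : m ≤ 2*p := by omega
      have hft : ∀ r ∈ Finset.Icc (-(p:ℤ)+1) (p:ℤ),
          ftil m r = (a * ((-1:ℝ)^m * a^m / Δx^m)) *
            ∑ s ∈ Finset.Icc (-(p:ℤ)+1) (p:ℤ), gam p m (r:ℝ) s * u (i + s) := by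
        intro r hr
        have h := IH m (by omega) hm1 hm2 r hr
        rw [h.2, h.1]
        ring
      rw [hu (m+1) hk1 hk2 j hj, show m+1-1 = m from rfl]
      calc -(1/Δx) * ∑ r ∈ Finset.Icc (-(p:ℤ)+1) (p:ℤ), gam p 1 (j:ℝ) r * ftil m r
          = -(1/Δx) * ∑ r ∈ Finset.Icc (-(p:ℤ)+1) (p:ℤ),
              ∑ s ∈ Finset.Icc (-(p:ℤ)+1) (p:ℤ),
              gam p 1 (j:ℝ) r * gam p m (r:ℝ) s *
                ((a * ((-1:ℝ)^m * a^m / Δx^m)) * u (i + s)) := by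
            congr 1
            refine Finset.sum_congr rfl fun r hr => ?_
            rw [hft r hr, Finset.mul_sum, Finset.mul_sum]
            exact Finset.sum_congr rfl fun s _ => by ring
        _ = -(1/Δx) * ∑ s ∈ Finset.Icc (-(p:ℤ)+1) (p:ℤ),
              (∑ r ∈ Finset.Icc (-(p:ℤ)+1) (p:ℤ), gam p 1 (j:ℝ) r * gam p m (r:ℝ) s) *
                ((a * ((-1:ℝ)^m * a^m / Δx^m)) * u (i + s)) := by
            rw [Finset.sum_comm]
            congr 1
            exact Finset.sum_congr rfl fun s _ => (Finset.sum_mul _ _ _).symm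
        _ = -(1/Δx) * ∑ s ∈ Finset.Icc (-(p:ℤ)+1) (p:ℤ),
              gam p (m+1) (j:ℝ) s * ((a * ((-1:ℝ)^m * a^m / Δx^m)) * u (i + s)) := by
            congr 1
            exact Finset.sum_congr rfl fun s hs => by rw [gam_comp p hp m _ hs]
        _ = ((-1:ℝ)^(m+1) * a^(m+1) / Δx^(m+1)) *
              ∑ s ∈ Finset.Icc (-(p:ℤ)+1) (p:ℤ), gam p (m+1) (j:ℝ) s * u (i + s) := by
            rw [Finset.mul_sum, Finset.mul_sum]
            refine Finset.sum_congr rfl fun s _ => ?_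
            field_simp
            ring
  refine ⟨hU, ?_⟩
  -- Part 2: ftil k j = a * util k j
  rcases eq_or_lt_of_le hk2 with hk2p | hklt
  · -- k = 2p: everything vanishes
    subst hk2p
    rw [hf _ hk1 le_rfl j hj, hU,
      Finset.sum_eq_zero (fun r hr => by rw [gam_top p 0 hr, zero_mul]),
      Finset.sum_eq_zero (fun r hr => by rw [gam_top p (j:ℝ) hr, zero_mul])]
    ring
  · -- k < 2p
    rw [hf k hk1 hk2 j hj]
    have hfac : (k.factorial : ℝ) ≠ 0 := Nat.cast_ne_zero.mpr k.factorial_ne_zero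
    have key : ∑ r ∈ Finset.Icc (-(p:ℤ)+1) (p:ℤ), gam p k 0 r * fstage k r j
        = a * Δt^k / (k.factorial : ℝ) * util k j * (k.factorial : ℝ) := by
      calc ∑ r ∈ Finset.Icc (-(p:ℤ)+1) (p:ℤ), gam p k 0 r * fstage k r j
          = ∑ r ∈ Finset.Icc (-(p:ℤ)+1) (p:ℤ),
              (a * (gam p k 0 r * (r:ℝ)^0) * u (i + j) +
               ∑ l ∈ Finset.Icc 1 k,
                 (a * Δt^l / (Nat.factorial l : ℝ) * util l j) * (gam p k 0 r * (r:ℝ)^l)) := by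
            refine Finset.sum_congr rfl fun r hr => ?_
            rw [hs k hk1 hk2 j hj r hr, mul_add, mul_add, Finset.mul_sum, Finset.mul_sum]
            congr 1
            · rw [pow_zero]; ring
            · exact Finset.sum_congr rfl fun l _ => by rw [mul_pow]; ring
        _ = a * (∑ r ∈ Finset.Icc (-(p:ℤ)+1) (p:ℤ), gam p k 0 r * (r:ℝ)^0) * u (i + j) +
              ∑ l ∈ Finset.Icc 1 k, (a * Δt^l / (Nat.factorial l : ℝ) * util l j) *
                ∑ r ∈ Finset.Icc (-(p:ℤ)+1) (p:ℤ), gam p k 0 r * (r:ℝ)^l := by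
            rw [Finset.sum_add_distrib, Finset.sum_comm]
            congr 1
            · rw [← Finset.sum_mul, ← Finset.mul_sum]
            · exact Finset.sum_congr rfl fun l _ => (Finset.mul_sum _ _ _).symm
        _ = ∑ l ∈ Finset.Icc 1 k, (a * Δt^l / (Nat.factorial l : ℝ) * util l j) *
              (if l = k then (k.factorial : ℝ) else 0) := by
            rw [gam_pow p k 0 (by omega), if_neg (by omega : ¬ (0 = k))]
            rw [mul_zero, zero_mul, zero_add]
            refine Finset.sum_congr rfl fun l hl => ?_
            rw [gam_pow p k l (by
              have := (Finset.mem_Icc.mp hl).2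
              omega)]
        _ = a * Δt^k / (k.factorial : ℝ) * util k j * (k.factorial : ℝ) := by
            rw [Finset.sum_eq_single k
              (fun l _ hlk => by rw [if_neg hlk, mul_zero])
              (fun hk' => absurd (Finset.mem_Icc.mpr ⟨hk1, le_rfl⟩) hk')]
            rw [if_pos rfl]
    rw [key]
    field_simp
end
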